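/- Let A be the adjacency matrix of an n-vertex graph with orthonormal eigenvector basis v₁,…,vₙ corresponding to eigenvalues λ₁ ≥ … ≥ λₙ. For every T > 0, Σ_{i,j : λᵢ,λⱼ ≥ T} λᵢλⱼ ‖vᵢ ∘ vⱼ‖₂² ≥ S_T²/n, where ∘ denotes the entrywise (Hadamard) product of vectors and S_T = Σ_{λᵢ ≥ T} λᵢ. -/
import Mathlib


open Finset

/-- Let `v 1, …, v n` be an orthonormal basis of eigenvectors of the adjacency matrix of an
`n`-vertex graph `G`, with corresponding eigenvalues `lam i`. For every `T > 0`,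
`∑_{i,j : lam i, lam j ≥ T} lam i * lam j * ‖v i ∘ v j‖₂² ≥ S_T² / n`, where `∘` is the
entrywise product and `S_T = ∑_{lam i ≥ T} lam i`. -/
theorem hadamard_sum_lower_bound {n : ℕ} (G : SimpleGraph (Fin n)) [DecidableRel G.Adj]
    (lam : Fin n → ℝ) (v : Fin n → Fin n → ℝ)
    (heig : ∀ i, (G.adjMatrix ℝ).mulVec (v i) = lam i • v i)
    (horth : ∀ i j, (∑ k, v i k * v j k) = if i = j then (1 : ℝ) else 0)
    (T : ℝ) (hT : 0 < T) :
    (∑ i ∈ Finset.univ.filter fun i => T ≤ lam i, lam i) ^ 2 / n ≤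
      ∑ i ∈ Finset.univ.filter (fun i => T ≤ lam i),
        ∑ j ∈ Finset.univ.filter (fun j => T ≤ lam j),
          lam i * lam j * (∑ k, (v i k * v j k) ^ 2) := by
  set S := Finset.univ.filter fun i => T ≤ lam i with hS
  set w : Fin n → ℝ := fun k => ∑ i ∈ S, lam i * (v i k) ^ 2 with hw
  have hsum : ∑ k, w k = ∑ i ∈ S, lam i := by
    rw [Finset.sum_comm]
    refine Finset.sum_congr rfl fun i _ => ?_
    rw [← Finset.mul_sum]
    have := horth i i
    simp only [if_pos rfl] at this
    simp [sq, ← Finset.mul_sum, this]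
  have hsq : ∑ k, (w k) ^ 2 = ∑ i ∈ S, ∑ j ∈ S,
      lam i * lam j * (∑ k, (v i k * v j k) ^ 2) := by
    have : ∀ k, (w k) ^ 2 = ∑ i ∈ S, ∑ j ∈ S,
        lam i * lam j * ((v i k * v j k) ^ 2) := by
      intro k
      rw [sq, hw, Finset.sum_mul_sum]
      refine Finset.sum_congr rfl fun i _ => Finset.sum_congr rfl fun j _ => ?_
      ring
    simp only [this]
    rw [Finset.sum_comm]
    refine Finset.sum_congr rfl fun i _ => ?_
    rw [Finset.sum_comm]
    refine Finset.sum_congr rfl fun j _ => ?_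
    rw [← Finset.mul_sum]
  have hcs : (∑ k, w k) ^ 2 ≤ n * ∑ k, (w k) ^ 2 := by
    have := sq_sum_le_card_mul_sum_sq (s := (Finset.univ : Finset (Fin n))) (f := w)
    simpa using this
  rw [← hsq, ← hsum]
  rcases Nat.eq_zero_or_pos n with h0 | hn
  · subst h0; simp
  · rw [div_le_iff₀ (by exact_mod_cast hn)]
    linarith [hcs]
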